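/- arXiv:0902.4771 — 8 statements merged into one kernel-verified Lean document; each statement's English description precedes it below -/
import Mathlib

section
/- Let q and s be quaternions with qs ≠ sq. Then (q - conj(s))⁻¹ * s * (q - conj(s)) - q = -(q - conj(s))⁻¹ * (q² - 2*q*Re(s) + |s|²), where Re(s) and |s|² are regarded as real scalars. -/
/-!
Since `s + s̄ = 2 Re s` and `s s̄ = |s|²` are central, expanding gives
`s (q - s̄) - (q - s̄) q = -(q² - 2 q Re s + |s|²)`. Multiplying on the left by `(q - s̄)⁻¹`
yields the claim; the inverse is genuine because `q = s̄` would make `q` commute with `s`.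
-/

open Quaternion

theorem inv_mul_mul_sub_eq_inv_mul_commutator {D : Type*} [DivisionRing D] {x : D} (hx : x ≠ 0)
    (s q : D) : x⁻¹ * s * x - q = x⁻¹ * (s * x - x * q) := by
  rw [mul_sub, ← mul_assoc, ← mul_assoc, inv_mul_cancel₀ hx, one_mul]

namespace Quaternion

variable {R : Type*} [CommRing R]

theorem mul_sub_star_sub_sub_star_mul (q s : ℍ[R]) :
    s * (q - star s) - (q - star s) * q =
      -(q ^ 2 - 2 * q * (s.re : ℍ[R]) + ((normSq s : R) : ℍ[R])) := by
  calc s * (q - star s) - (q - star s) * q = (s + star s) * q - s * star s - q ^ 2 := by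
        noncomm_ring
    _ = 2 * (s.re : ℍ[R]) * q - ((normSq s : R) : ℍ[R]) - q ^ 2 := by
        rw [self_add_star', self_mul_star]
        push_cast
        rfl
    _ = -(q ^ 2 - 2 * q * (s.re : ℍ[R]) + ((normSq s : R) : ℍ[R])) := by
        rw [mul_assoc, coe_commutes, ← mul_assoc]
        noncomm_ring

theorem sub_star_ne_zero_of_mul_ne_mul {q s : ℍ[R]} (h : q * s ≠ s * q) : q - star s ≠ 0 := by
  rintro hq
  rw [sub_eq_zero.mp hq, star_comm_self] at h
  exact h rfl

end Quaternion

theorem stmt_1 (q s : ℍ[ℝ]) (h : q * s ≠ s * q) :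
    (q - star s)⁻¹ * s * (q - star s) - q =
      -(q - star s)⁻¹ * (q ^ 2 - 2 * q * (s.re : ℍ[ℝ]) + ((‖s‖ ^ 2 : ℝ) : ℍ[ℝ])) := by
  rw [inv_mul_mul_sub_eq_inv_mul_commutator (sub_star_ne_zero_of_mul_ne_mul h),
    mul_sub_star_sub_sub_star_mul, sq ‖s‖, ← normSq_eq_norm_mul_self, neg_mul, mul_neg]
end

section
/- For any quaternions q, s with q ≠ conj(s), the identity -(q - conj(s))⁻¹ * (q² - 2*Re(s)*q + |s|²) = (s² - 2*Re(q)*s + |q|²) * (s - conj(q))⁻¹ holds. -/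
/-! Both quadratics become affine by Cayley–Hamilton, `q ^ 2 = 2 Re(q) q - |q|²`: with
`t = Re q - Re s` and `d = |s|² - |q|²` the left one is `P = 2 t q + d` and the right one is
`Q = -(2 t s + d)`. Hence
`(q - s̄)(2 t s + d) + P (q̄ - s) = 2 t (|q|² - |s|²) + 2 d (Re q - Re s)` vanishes, i.e.
`(q - s̄) Q = P conj (q - s̄)`, and since `s - q̄ = -conj (q - s̄)` the claim follows by cancelling
`q - s̄` on the left and its conjugate on the right; when they vanish, both sides are `0`
because `0⁻¹ = 0`. -/

open Quaternion

theorem Quaternion.sub_star_mul_quadratic_eq {R : Type*} [CommRing R] (q s : ℍ[R]) :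
    (q - star s) * (s ^ 2 - 2 * (q.re : ℍ[R]) * s + ((normSq q : R) : ℍ[R])) =
      (q ^ 2 - 2 * (s.re : ℍ[R]) * q + ((normSq s : R) : ℍ[R])) * star (q - star s) := by
  ext <;> simp [normSq_def', sq, two_mul, re_mul, imI_mul, imJ_mul, imK_mul] <;> ring

theorem inv_mul_eq_mul_inv_of_mul_eq {K : Type*} [DivisionRing K] {a b p r : K}
    (hab : a = 0 ↔ b = 0) (h : p * b = a * r) : a⁻¹ * p = r * b⁻¹ := by
  by_cases ha : a = 0
  · simp [ha, hab.mp ha]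
  · have hb : b ≠ 0 := fun hb => ha (hab.mpr hb)
    rw [inv_mul_eq_iff_eq_mul₀ ha, ← mul_assoc, ← h, mul_inv_cancel_right₀ hb]

theorem stmt_3_general (q s : ℍ[ℝ]) :
    -(q - star s)⁻¹ * (q ^ 2 - 2 * ((s.re : ℝ) : ℍ[ℝ]) * q + ((‖s‖ ^ 2 : ℝ) : ℍ[ℝ])) =
      (s ^ 2 - 2 * ((q.re : ℝ) : ℍ[ℝ]) * s + ((‖q‖ ^ 2 : ℝ) : ℍ[ℝ])) * (s - star q)⁻¹ := by
  have hconj : s - star q = -star (q - star s) := by simp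
  rw [hconj, inv_neg, mul_neg, neg_mul, neg_inj, sq ‖s‖, sq ‖q‖,
    ← normSq_eq_norm_mul_self, ← normSq_eq_norm_mul_self]
  exact inv_mul_eq_mul_inv_of_mul_eq star_eq_zero.symm (sub_star_mul_quadratic_eq q s).symm

theorem stmt_3 (q s : ℍ[ℝ]) (h : q ≠ star s) :
    -(q - star s)⁻¹ * (q ^ 2 - 2 * ((s.re : ℝ) : ℍ[ℝ]) * q + ((‖s‖ ^ 2 : ℝ) : ℍ[ℝ])) =
      (s ^ 2 - 2 * ((q.re : ℝ) : ℍ[ℝ]) * s + ((‖q‖ ^ 2 : ℝ) : ℍ[ℝ])) * (s - star q)⁻¹ :=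
  stmt_3_general q s
end

section
/- Let q, s be quaternions with q² - 2*Re(s)*q + |s|² ≠ 0, and suppose qs = sq. Then -(q² - 2*Re(s)*q + |s|²)⁻¹ * (q - conj(s)) = (s - q)⁻¹, provided also s ≠ q. -/
/-!
Since `star s = 2 Re s - s`, a quaternion `q` commuting with `s` also commutes with `star s`, and
`q² - 2 Re(s) q + |s|²` factors as `(q - s)(q - star s)` with commuting factors. Inverting this
product and cancelling the factor `q - star s` leaves `(q - s)⁻¹`.
-/

open Quaternion

theorem Commute.mul_inv_mul_cancel_right₀ {G₀ : Type*} [GroupWithZero G₀] {a b : G₀}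
    (h : Commute a b) (hb : b ≠ 0) : (a * b)⁻¹ * b = a⁻¹ := by
  rw [h.eq, mul_inv_rev, inv_mul_cancel_right₀ hb]

namespace Quaternion

variable {R : Type*} [CommRing R] {q s : ℍ[R]}

theorem star_eq_two_mul_re_sub (s : ℍ[R]) : star s = 2 * (s.re : ℍ[R]) - s :=
  eq_sub_of_add_eq' (self_add_star s)

theorem commute_two_mul_re (s q : ℍ[R]) : Commute (2 * (s.re : ℍ[R])) q :=
  (Commute.ofNat_left 2 q).mul_left (coe_commute _ q)

theorem commute_star_right (h : Commute q s) : Commute q (star s) := by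
  rw [star_eq_two_mul_re_sub]
  exact (commute_two_mul_re s q).symm.sub_right h

theorem sub_mul_sub_star (h : Commute q s) :
    (q - s) * (q - star s) = q ^ 2 - 2 * (s.re : ℍ[R]) * q + ((normSq s : R) : ℍ[R]) := by
  have hstar : q * star s = 2 * (s.re : ℍ[R]) * q - s * q := by
    rw [star_eq_two_mul_re_sub, mul_sub, h.eq, (commute_two_mul_re s q).eq]
  calc (q - s) * (q - star s) = q ^ 2 - q * star s - s * q + s * star s := by noncomm_ring
    _ = _ := by rw [hstar, self_mul_star]; abel

end Quaternion

theorem stmt_5_general (q s : ℍ[ℝ])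
    (h0 : q ^ 2 - 2 * ((s.re : ℝ) : ℍ[ℝ]) * q + ((‖s‖ ^ 2 : ℝ) : ℍ[ℝ]) ≠ 0)
    (hcomm : q * s = s * q) :
    -(q ^ 2 - 2 * ((s.re : ℝ) : ℍ[ℝ]) * q + ((‖s‖ ^ 2 : ℝ) : ℍ[ℝ]))⁻¹ * (q - star s) =
      (s - q)⁻¹ := by
  have hqs : Commute q s := hcomm
  have hfactor := sub_mul_sub_star hqs
  rw [normSq_eq_norm_mul_self, ← sq] at hfactor
  rw [← hfactor] at h0 ⊢
  have hfactors_comm : Commute (q - s) (q - star s) :=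
    ((Commute.refl q).sub_left hqs.symm).sub_right
      (commute_star_right (hqs.sub_left (Commute.refl s)))
  rw [neg_mul, hfactors_comm.mul_inv_mul_cancel_right₀ (right_ne_zero_of_mul h0), ← inv_neg,
    neg_sub]

theorem stmt_5 (q s : ℍ[ℝ])
    (h0 : q ^ 2 - 2 * ((s.re : ℝ) : ℍ[ℝ]) * q + ((‖s‖ ^ 2 : ℝ) : ℍ[ℝ]) ≠ 0)
    (hcomm : q * s = s * q) (hne : s ≠ q) :
    -(q ^ 2 - 2 * ((s.re : ℝ) : ℍ[ℝ]) * q + ((‖s‖ ^ 2 : ℝ) : ℍ[ℝ]))⁻¹ * (q - star s) =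
      (s - q)⁻¹ :=
  stmt_5_general q s h0 hcomm
end

section
/- Let q, s be quaternions with |q| < |s| (so s ≠ 0). Then the series ∑_{n≥0} qⁿ * s^{-1-n} converges, and if moreover q² - 2*Re(s)*q + |s|² ≠ 0, its sum equals -(q² - 2*Re(s)*q + |s|²)⁻¹ * (q - conj(s)). -/
/-! The sum `T` solves the Sylvester equation `T * s - q * T = 1`. Since `s` is a root of its
characteristic polynomial `X² - 2 Re(s) X + |s|²`, whose coefficients are real and hence central,
multiplying by this polynomial evaluated at `q` eliminates `q` from one side:
`(q² - 2 Re(s) q + |s|²) T = 2 Re(s) - s - q = conj s - q`. -/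

open Quaternion

theorem summable_pow_mul_inv_pow_succ {𝕜 : Type*} [NormedDivisionRing 𝕜] [CompleteSpace 𝕜]
    {q s : 𝕜} (h : ‖q‖ < ‖s‖) : Summable (fun n : ℕ => q ^ n * s⁻¹ ^ (n + 1)) := by
  have hs : 0 < ‖s‖ := (norm_nonneg q).trans_lt h
  have hr : ‖q‖ / ‖s‖ < 1 := (div_lt_one hs).2 h
  refine Summable.of_norm ?_
  refine (summable_geometric_of_lt_one (by positivity) hr).mul_right ‖s‖⁻¹ |>.congr fun n => ?_
  rw [norm_mul, norm_pow, norm_pow, norm_inv]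
  ring

theorem mul_sub_mul_eq_one_of_hasSum_pow_mul_inv_pow_succ {𝕜 : Type*} [DivisionRing 𝕜]
    [TopologicalSpace 𝕜] [IsTopologicalRing 𝕜] [T2Space 𝕜] {q s T : 𝕜} (hs : s ≠ 0)
    (hT : HasSum (fun n : ℕ => q ^ n * s⁻¹ ^ (n + 1)) T) : T * s - q * T = 1 := by
  have hTs : HasSum (fun n : ℕ => q ^ n * s⁻¹ ^ n) (T * s) := by
    refine (hT.mul_right s).congr_fun fun n => ?_
    rw [pow_succ, mul_assoc, mul_assoc, inv_mul_cancel₀ hs, mul_one]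
  have hqT : HasSum (fun n : ℕ => q ^ (n + 1) * s⁻¹ ^ (n + 1)) (q * T) := by
    refine (hT.mul_left q).congr_fun fun n => ?_
    rw [pow_succ', mul_assoc]
  have hshift := (hasSum_nat_add_iff' 1).2 hTs
  simp only [Finset.sum_range_one, pow_zero, mul_one] at hshift
  rw [← hshift.unique hqT]
  abel

theorem mul_eq_sub_of_mul_sub_mul_eq_one {A : Type*} [Ring A] {q s T a b : A}
    (hT : T * s - q * T = 1) (ha : Commute a T) (hb : Commute b T)
    (hs : s ^ 2 - a * s + b = 0) : (q ^ 2 - a * q + b) * T = a - s - q := by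
  have hqT : q * T = T * s - 1 := by rw [← hT]; abel
  calc (q ^ 2 - a * q + b) * T = q * (q * T) - a * (q * T) + b * T := by noncomm_ring
    _ = T * (s ^ 2 - a * s + b) + (a - s - q) := by
      rw [hqT, mul_sub, ← mul_assoc, hqT, mul_sub, ← mul_assoc, ha.eq, hb.eq]; noncomm_ring
    _ = a - s - q := by rw [hs, mul_zero, zero_add]

theorem Quaternion.two_re_sub_self (s : ℍ[ℝ]) : 2 * ((s.re : ℝ) : ℍ[ℝ]) - s = star s := by
  rw [star_eq_two_re_sub, coe_mul]
  rfl

theorem Quaternion.sq_sub_two_re_mul_add_norm_sq (s : ℍ[ℝ]) :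
    s ^ 2 - 2 * ((s.re : ℝ) : ℍ[ℝ]) * s + ((‖s‖ ^ 2 : ℝ) : ℍ[ℝ]) = 0 := by
  rw [sq ‖s‖, ← normSq_eq_norm_mul_self, ← star_mul_self, ← two_re_sub_self]
  noncomm_ring

theorem stmt_6 (q s : ℍ[ℝ]) (h : ‖q‖ < ‖s‖) :
    Summable (fun n : ℕ => q ^ n * (s⁻¹) ^ (n + 1)) ∧
    (q ^ 2 - 2 * ((s.re : ℝ) : ℍ[ℝ]) * q + ((‖s‖ ^ 2 : ℝ) : ℍ[ℝ]) ≠ 0 →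
      ∑' n : ℕ, q ^ n * (s⁻¹) ^ (n + 1) =
        -(q ^ 2 - 2 * ((s.re : ℝ) : ℍ[ℝ]) * q + ((‖s‖ ^ 2 : ℝ) : ℍ[ℝ]))⁻¹ * (q - star s)) := by
  have hsum := summable_pow_mul_inv_pow_succ h
  refine ⟨hsum, fun hP => ?_⟩
  have hs : s ≠ 0 := norm_pos_iff.mp ((norm_nonneg q).trans_lt h)
  have hPT := mul_eq_sub_of_mul_sub_mul_eq_one
    (mul_sub_mul_eq_one_of_hasSum_pow_mul_inv_pow_succ hs hsum.hasSum)
    ((Commute.ofNat_left 2 _).mul_left (coe_commutes _ _)) (coe_commutes _ _)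
    s.sq_sub_two_re_mul_add_norm_sq
  rw [two_re_sub_self] at hPT
  rw [neg_mul, ← mul_neg, neg_sub, ← hPT, inv_mul_cancel_left₀ hP]
end

section
/- For real numbers u, v with v > 0 and a purely imaginary unit quaternion I, and any quaternion q with |q - u| ≠ v or Re(q) ≠ u, the quaternion q² - 2*u*q + u² + v² is nonzero; hence the Cauchy kernel S⁻¹(u+vI, q) = -(q² - 2uq + u² + v²)⁻¹(q - u + vI) is well-defined exactly when q does not lie on the 2-sphere {u + v*J : J purely imaginary unit}. -/
/-!
Completing the square, `q² - 2uq + u² + v² = (q - u)² + v²` because real scalars are central.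
Writing `p = q - u = a + w` with `a` real and `w` imaginary, `p² = (a² - |w|²) + 2a w`, so `p² = -v²`
forces `a w = 0`; if `a ≠ 0` then `w = 0` and `a² = -v² ≤ 0`, absurd. Hence `a = 0` and `|w| = v`.
-/

open Quaternion

namespace Quaternion

variable {R : Type*} [CommRing R]

theorem sq_eq_coe_add_smul_im (a : ℍ[R]) :
    a ^ 2 = ((a.re ^ 2 - normSq a.im : R) : ℍ[R]) + (2 * a.re) • a.im := by
  ext <;> simp [sq, normSq_def'] <;> ring

theorem sq_sub_two_mul_add_coe_eq_sub_sq_add (a : ℍ[R]) (u c : R) :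
    a ^ 2 - 2 * (u : ℍ[R]) * a + (c : ℍ[R]) = (a - u) ^ 2 + ((c - u ^ 2 : R) : ℍ[R]) := by
  have hcomm : (u : ℍ[R]) * a = a * u := coe_commutes u a
  push_cast
  simp only [sq, sub_mul, mul_sub, two_mul, add_mul, hcomm]
  abel

variable [LinearOrder R] [IsStrictOrderedRing R]

theorem sq_eq_neg_coe_iff {a : ℍ[R]} {c : R} (hc : 0 ≤ c) :
    a ^ 2 = -(c : ℍ[R]) ↔ a.re = 0 ∧ normSq a.im = c := by
  have hsq := sq_eq_coe_add_smul_im a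
  constructor
  · intro h
    rw [h] at hsq
    have hre := congrArg (·.re) hsq
    have him := congrArg (·.im) hsq
    simp only [re_neg, re_coe, re_add, re_smul, re_im, smul_zero, add_zero, im_neg, im_coe,
      neg_zero, im_add, im_smul, im_idem, zero_add] at hre him
    have hnorm : normSq a.im = a.re ^ 2 + c := by linear_combination hre
    have hprod : (2 * a.re) ^ 2 * (a.re ^ 2 + c) = 0 := by
      rw [← hnorm, ← normSq_smul, ← him, map_zero]
    have hre0 : a.re = 0 := pow_eq_zero_iff (n := 4) (by norm_num) |>.1 <| by
      nlinarith [mul_nonneg (sq_nonneg a.re) hc, sq_nonneg (a.re ^ 2)]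
    exact ⟨hre0, by rw [hnorm, hre0]; ring⟩
  · rintro ⟨hre, rfl⟩
    rw [hsq, hre]
    simp

end Quaternion

theorem Quaternion.norm_eq_iff_normSq_eq {a : ℍ[ℝ]} {v : ℝ} (hv : 0 ≤ v) :
    ‖a‖ = v ↔ normSq a = v ^ 2 := by
  rw [normSq_eq_norm_mul_self, ← sq, pow_left_inj₀ (norm_nonneg _) hv two_ne_zero]

theorem stmt_9_general (u v : ℝ) (hv : 0 < v) (q : ℍ[ℝ]) :
    ((‖q - (u : ℍ[ℝ])‖ ≠ v ∨ q.re ≠ u) →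
      q ^ 2 - 2 * (u : ℍ[ℝ]) * q + ((u ^ 2 + v ^ 2 : ℝ) : ℍ[ℝ]) ≠ 0) ∧
    (q ^ 2 - 2 * (u : ℍ[ℝ]) * q + ((u ^ 2 + v ^ 2 : ℝ) : ℍ[ℝ]) = 0 ↔
      q.re = u ∧ ‖q.im‖ = v) := by
  have key : q ^ 2 - 2 * (u : ℍ[ℝ]) * q + ((u ^ 2 + v ^ 2 : ℝ) : ℍ[ℝ]) = 0 ↔
      q.re = u ∧ ‖q.im‖ = v := by
    rw [sq_sub_two_mul_add_coe_eq_sub_sq_add, add_sub_cancel_left, add_eq_zero_iff_eq_neg,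
      sq_eq_neg_coe_iff (sq_nonneg v), norm_eq_iff_normSq_eq hv.le]
    simp [sub_eq_zero]
  refine ⟨fun hq hzero => ?_, key⟩
  obtain ⟨hre, hnorm⟩ := key.1 hzero
  have hsub : q - u = q.im := by rw [← hre]; exact sub_eq_of_eq_add' (re_add_im q).symm
  exact hq.elim (· (hsub ▸ hnorm)) (· hre)

theorem stmt_9 (u v : ℝ) (hv : 0 < v) (I : ℍ[ℝ]) (hI : I ^ 2 = -1) (q : ℍ[ℝ]) :
    ((‖q - (u : ℍ[ℝ])‖ ≠ v ∨ q.re ≠ u) →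
      q ^ 2 - 2 * (u : ℍ[ℝ]) * q + ((u ^ 2 + v ^ 2 : ℝ) : ℍ[ℝ]) ≠ 0) ∧
    (q ^ 2 - 2 * (u : ℍ[ℝ]) * q + ((u ^ 2 + v ^ 2 : ℝ) : ℍ[ℝ]) = 0 ↔
      q.re = u ∧ ‖q.im‖ = v) :=
  stmt_9_general u v hv q
end

section
/- Let q and s be quaternions with qs ≠ sq, and set W := (q - conj(s))⁻¹ * s * (q - conj(s)). Then W² - (s + q)*W + s*q = 0. -/
/-!
With `d = q - s̄` (nonzero, as `s̄` commutes with `s`) we have `d W = s d`. Conjugation by `d`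
preserves the real quadratic `x² - (s + s̄) x + s s̄` annihilating `s`, so it annihilates `W`;
and the left-coefficient quadratic at `W` differs from it by `s d - d W = 0`.
-/

open Quaternion

theorem SemiconjBy.sq_sub_mul_add_eq_zero {R : Type*} [Ring R] [NoZeroDivisors R]
    {d x y t n : R} (h : SemiconjBy d x y) (hd : d ≠ 0) (ht : Commute d t) (hn : Commute d n)
    (hy : y ^ 2 - t * y + n = 0) : x ^ 2 - t * x + n = 0 := by
  have hxy : SemiconjBy d (x ^ 2 - t * x + n) (y ^ 2 - t * y + n) :=
    ((h.pow_right 2).sub_right (ht.semiconjBy.mul_right h)).add_right hn.semiconjBy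
  rw [hy] at hxy
  exact (mul_eq_zero.mp (hxy.eq.trans (zero_mul d))).resolve_left hd

theorem Quaternion.sq_sub_add_star_mul_add_mul_star {R : Type*} [CommRing R] (s : ℍ[R]) :
    s ^ 2 - (s + star s) * s + s * star s = 0 := by
  rw [← star_comm_self' s]
  noncomm_ring

theorem Quaternion.sq_sub_add_star_mul_add_mul_star_of_semiconjBy {R : Type*} [CommRing R]
    [NoZeroDivisors ℍ[R]] {d w s : ℍ[R]} (h : SemiconjBy d w s) (hd : d ≠ 0) :
    w ^ 2 - (s + star s) * w + s * star s = 0 :=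
  h.sq_sub_mul_add_eq_zero hd (by rw [self_add_star']; exact (coe_commutes _ d).symm)
    (by rw [self_mul_star]; exact (coe_commutes _ d).symm) s.sq_sub_add_star_mul_add_mul_star

theorem stmt_12 (q s : ℍ[ℝ]) (h : q * s ≠ s * q) :
    ((q - star s)⁻¹ * s * (q - star s)) ^ 2 -
      (s + q) * ((q - star s)⁻¹ * s * (q - star s)) + s * q = 0 := by
  have hd : q - star s ≠ 0 := sub_ne_zero.mpr (by rintro rfl; exact h (star_comm_self' s))
  have hW : SemiconjBy (q - star s) ((q - star s)⁻¹ * s * (q - star s)) s := by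
    rw [SemiconjBy, ← mul_assoc, ← mul_assoc, mul_inv_cancel₀ hd, one_mul]
  generalize (q - star s)⁻¹ * s * (q - star s) = W at hW
  calc W ^ 2 - (s + q) * W + s * q
      = W ^ 2 - (s + star s) * W + s * star s + (s * (q - star s) - (q - star s) * W) := by
        noncomm_ring
    _ = 0 := by
        rw [sq_sub_add_star_mul_add_mul_star_of_semiconjBy hW hd, hW.eq, sub_self, add_zero]
end

section
/- Let s = u + v*I with u, v real and I a purely imaginary unit quaternion, and let q be a quaternion with q² - 2*u*q + u² + v² ≠ 0. Then the derivative in the real direction of the map x ↦ S⁻¹(s, q + x) at x = 0, where S⁻¹(s,q) = -(q² - 2*Re(s)*q + |s|²)⁻¹(q - conj(s)), equals (q² - 2*Re(s)*q + |s|²)⁻² * (q² - 2*q*conj(s) + conj(s)²). -/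
/-!
The real quadratic `Q(z) = z² - 2 Re(s) z + |s|²` is the characteristic polynomial of both `s` and
`t = conj(s)`, so `Q(t) = 0`. Since `Q` has real coefficients, `Q(q)` commutes with
`Q'(q) = 2q - 2 Re(s)`, so the noncommutative quotient rule `(Q⁻¹)' = -Q⁻¹ Q' Q⁻¹` gives the
derivative `Q(q)⁻² (Q'(q)(q - t) - Q(q))`, and `Q'(q)(q - t) - Q(q) = q² - 2qt + t² - Q(t)`.
-/

open Quaternion

theorem HasDerivAt.inv' {𝕜 D : Type*} [NontriviallyNormedField 𝕜] [NormedDivisionRing D]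
    [NormedAlgebra 𝕜 D] {f : 𝕜 → D} {f' : D} {x : 𝕜} (hf : HasDerivAt f f' x) (hx : f x ≠ 0) :
    HasDerivAt (fun y => (f y)⁻¹) (-((f x)⁻¹ * f' * (f x)⁻¹)) x :=
  (hasFDerivAt_inv' (𝕜 := 𝕜) hx).comp_hasDerivAt x hf

namespace Quaternion

variable {R : Type*} [CommRing R]

theorem sq_sub_two_re_mul_add_normSq (a : ℍ[R]) :
    a ^ 2 - 2 * (a.re : ℍ[R]) * a + ((normSq a : R) : ℍ[R]) = 0 := by
  rw [← self_add_star, ← self_mul_star, pow_two, add_mul, ← star_comm_self']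
  noncomm_ring

variable [LinearOrder R] [IsStrictOrderedRing R]

theorem re_eq_zero_of_sq_eq_neg_one {I : ℍ[R]} (hI : I ^ 2 = -1) : I.re = 0 := by
  have hre := congrArg (·.re) hI
  have hi := congrArg (·.imI) hI
  have hj := congrArg (·.imJ) hI
  have hk := congrArg (·.imK) hI
  simp only [pow_two, re_mul, imI_mul, imJ_mul, imK_mul, re_neg, imI_neg, imJ_neg, imK_neg,
    re_one, imI_one, imJ_one, imK_one] at hre hi hj hk
  nlinarith [sq_nonneg I.re, sq_nonneg I.imI, sq_nonneg I.imJ, sq_nonneg I.imK]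

theorem re_add_mul_of_sq_eq_neg_one {I : ℍ[R]} (hI : I ^ 2 = -1) (u v : R) :
    ((u : ℍ[R]) + (v : ℍ[R]) * I).re = u := by
  simp [re_eq_zero_of_sq_eq_neg_one hI]

theorem normSq_add_mul_of_sq_eq_neg_one {I : ℍ[R]} (hI : I ^ 2 = -1) (u v : R) :
    normSq ((u : ℍ[R]) + (v : ℍ[R]) * I) = u ^ 2 + v ^ 2 := by
  have hre := congrArg (·.re) hI
  simp only [pow_two, re_mul, re_neg, re_one, re_eq_zero_of_sq_eq_neg_one hI] at hre
  simp only [normSq_def', re_add, re_coe, re_mul, re_eq_zero_of_sq_eq_neg_one hI, mul_zero,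
    imI_coe, zero_mul, sub_self, imJ_coe, imK_coe, add_zero, imI_add, imI_mul, sub_zero, zero_add,
    imJ_add, imJ_mul, imK_add, imK_mul]
  linear_combination (-v ^ 2) * hre

end Quaternion

theorem inv_mul_mul_inv_mul_sub_inv {D : Type*} [DivisionRing D] {p p' : D} (hp : p ≠ 0)
    (h : Commute p p') (w : D) : p⁻¹ * p' * p⁻¹ * w - p⁻¹ = p⁻¹ ^ 2 * (p' * w - p) := by
  rw [pow_two, mul_sub, mul_assoc p⁻¹ p⁻¹ p, inv_mul_cancel₀ hp, mul_one, mul_assoc p⁻¹ p',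
    ← h.inv_left₀.eq]
  simp only [mul_assoc]

section

variable {D : Type*} [NormedDivisionRing D] [NormedAlgebra ℝ D]

theorem hasDerivAt_add_algebraMap (q : D) (x : ℝ) :
    HasDerivAt (fun y : ℝ => q + algebraMap ℝ D y) 1 x := by
  simpa [Algebra.algebraMap_eq_smul_one] using ((hasDerivAt_id x).smul_const (1 : D)).const_add q

theorem hasDerivAt_neg_inv_quadratic_mul_sub (a b : ℝ) {q t : D}
    (ht : t ^ 2 - 2 * algebraMap ℝ D a * t + algebraMap ℝ D b = 0)
    (hq : q ^ 2 - 2 * algebraMap ℝ D a * q + algebraMap ℝ D b ≠ 0) :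
    HasDerivAt (fun x : ℝ => -((q + algebraMap ℝ D x) ^ 2 - 2 * algebraMap ℝ D a *
        (q + algebraMap ℝ D x) + algebraMap ℝ D b)⁻¹ * (q + algebraMap ℝ D x - t))
      ((q ^ 2 - 2 * algebraMap ℝ D a * q + algebraMap ℝ D b)⁻¹ ^ 2 *
        (q ^ 2 - 2 * q * t + t ^ 2)) 0 := by
  have hlin := hasDerivAt_add_algebraMap q 0
  have hP : HasDerivAt (fun x : ℝ => (q + algebraMap ℝ D x) ^ 2 - 2 * algebraMap ℝ D a *
      (q + algebraMap ℝ D x) + algebraMap ℝ D b) (q + q - 2 * algebraMap ℝ D a) 0 := by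
    simpa [pow_two] using
      ((hlin.fun_mul hlin).fun_sub (hlin.const_mul (2 * algebraMap ℝ D a))).add_const
        (algebraMap ℝ D b)
  have hkey : (q + q - 2 * algebraMap ℝ D a) * (q - t) -
      (q ^ 2 - 2 * algebraMap ℝ D a * q + algebraMap ℝ D b) = q ^ 2 - 2 * q * t + t ^ 2 := calc
    _ = q ^ 2 - 2 * q * t + t ^ 2 -
        (t ^ 2 - 2 * algebraMap ℝ D a * t + algebraMap ℝ D b) := by noncomm_ring
    _ = q ^ 2 - 2 * q * t + t ^ 2 := by rw [ht, sub_zero]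
  refine ((hP.inv' (by simpa using hq)).fun_neg.fun_mul (hlin.sub_const t)).congr_deriv ?_
  simp only [map_zero, add_zero, mul_one, neg_neg, ← sub_eq_add_neg]
  set P := q ^ 2 - 2 * algebraMap ℝ D a * q + algebraMap ℝ D b
  have hqP : Commute q P :=
    (((Commute.refl q).pow_right 2).sub_right (((Commute.ofNat_right q 2).mul_right
      (Algebra.commute_algebraMap_right a q)).mul_right (Commute.refl q))).add_right
        (Algebra.commute_algebraMap_right b q)
  have hPP' : Commute P (q + q - 2 * algebraMap ℝ D a) :=
    (hqP.symm.add_right hqP.symm).sub_right ((Commute.ofNat_right P 2).mul_right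
      (Algebra.commute_algebraMap_right a P))
  rw [← hkey, inv_mul_mul_inv_mul_sub_inv hq hPP']

end

theorem stmt_15 (u v : ℝ) (I : ℍ[ℝ]) (hI : I ^ 2 = -1) (s q : ℍ[ℝ])
    (hs : s = (u : ℍ[ℝ]) + (v : ℍ[ℝ]) * I)
    (h0 : q ^ 2 - 2 * ((u : ℝ) : ℍ[ℝ]) * q + ((u ^ 2 + v ^ 2 : ℝ) : ℍ[ℝ]) ≠ 0) :
    HasDerivAt
      (fun x : ℝ =>
        -((q + (x : ℍ[ℝ])) ^ 2 - 2 * ((s.re : ℝ) : ℍ[ℝ]) * (q + (x : ℍ[ℝ])) +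
            ((‖s‖ ^ 2 : ℝ) : ℍ[ℝ]))⁻¹ * ((q + (x : ℍ[ℝ])) - star s))
      (((q ^ 2 - 2 * ((s.re : ℝ) : ℍ[ℝ]) * q + ((‖s‖ ^ 2 : ℝ) : ℍ[ℝ]))⁻¹) ^ 2 *
        (q ^ 2 - 2 * q * star s + (star s) ^ 2))
      0 := by
  have hre : s.re = u := hs ▸ re_add_mul_of_sq_eq_neg_one hI u v
  have hnorm : ‖s‖ ^ 2 = u ^ 2 + v ^ 2 := by
    rw [sq, ← normSq_eq_norm_mul_self, hs, normSq_add_mul_of_sq_eq_neg_one hI]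
  have hroot := sq_sub_two_re_mul_add_normSq (star s)
  rw [re_star, normSq_star, normSq_eq_norm_mul_self, ← sq] at hroot
  simpa only [algebraMap_def] using
    hasDerivAt_neg_inv_quadratic_mul_sub (D := ℍ[ℝ]) s.re (‖s‖ ^ 2) hroot (by rwa [hre, hnorm])
end

section
/- Let I be a purely imaginary unit quaternion, q = x + y*I with x, y real, y > 0, and let s₁ = x + y*I. Parametrize a small circle around s₁ in the plane L_I by s(θ) = s₁ + ε e^{Iθ}. Then the limit as ε → 0⁺ of (1/2π)∫₀^{2π} -(q² - 2Re(s(θ))q + |s(θ)|²)⁻¹ (q - conj(s(θ))) ε e^{Iθ} dθ · 1 equals ½(1 - I·I) = 1 when the kernel variable unit coincides with I; more generally, for q = x + y*I_q with I_q a purely imaginary unit, the residue at s₁ = x + yI equals ½(1 - I_q·I). -/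
/-!
Along the circle `s = s₁ + ε e^{Iθ}` the slice quadratic `q² - 2 Re(s) q + |s|²` factors as
`ε · D(ε, θ)` with `D = ε + 2y sin θ - 2y cos θ I_q`, and `|D| ≥ 2y - |ε|`. Cancelling `ε`, the
integrand becomes a function of `(ε, θ)` that is continuous for `|ε| < 2y`, so the limit is the
mean of its value at `ε = 0`. That value is the constant `½(1 - I_q I)`, because `I_q + I`
intertwines the two units: `I_q (I_q + I) = (I_q + I) I`.
-/

open Quaternion Real

open Filter Topology Set

theorem continuousAt_intervalIntegral_of_continuousOn {E : Type*} [NormedAddCommGroup E]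
    [NormedSpace ℝ E] {f : ℝ → ℝ → E} {U : Set ℝ} {ε₀ : ℝ} (hU : U ∈ 𝓝 ε₀)
    (hf : ContinuousOn f.uncurry (U ×ˢ univ)) (a b : ℝ) :
    ContinuousAt (fun ε => ∫ θ in a..b, f ε θ) ε₀ := by
  obtain ⟨c, d, hcd, hnhds, hsub⟩ := exists_Icc_mem_subset_of_mem_nhds hU
  have hle : c ≤ d := hcd.1.trans hcd.2
  have hclamped : Continuous (fun ε θ => f (projIcc c d hle ε) θ).uncurry :=
    hf.comp_continuous (f := fun z : ℝ × ℝ => ((projIcc c d hle z.1 : ℝ), z.2)) (by fun_prop)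
      fun z => ⟨hsub (projIcc c d hle z.1).2, mem_univ _⟩
  refine (intervalIntegral.continuous_parametric_intervalIntegral_of_continuous'
    (μ := MeasureTheory.volume) hclamped a b |>.continuousAt).congr ?_
  filter_upwards [hnhds] with ε hε
  simp only [projIcc_of_mem hle hε]

namespace Quaternion

variable {u : ℍ[ℝ]}

theorem re_eq_zero_of_sq_eq_neg_one_s18 (hu : u ^ 2 = -1) : u.re = 0 := by
  have h := congr_arg (fun z : ℍ[ℝ] => (z.re, z.imI, z.imJ, z.imK)) hu
  simp only [sq, re_mul, imI_mul, imJ_mul, imK_mul, re_neg, imI_neg, imJ_neg, imK_neg, re_one,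
    imI_one, imJ_one, imK_one, Prod.mk.injEq] at h
  nlinarith [sq_nonneg u.re, sq_nonneg u.imI, sq_nonneg u.imJ, sq_nonneg u.imK]

theorem normSq_eq_one_of_sq_eq_neg_one (hu : u ^ 2 = -1) : normSq u = 1 := by
  have h := (sq_eq_neg_normSq (a := u)).2 (re_eq_zero_of_sq_eq_neg_one_s18 hu)
  rw [hu, neg_inj, ← coe_one] at h
  exact coe_injective h.symm

theorem imI_sq_add_imJ_sq_add_imK_sq_of_sq_eq_neg_one (hu : u ^ 2 = -1) :
    u.imI ^ 2 + u.imJ ^ 2 + u.imK ^ 2 = 1 := by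
  have h := normSq_eq_one_of_sq_eq_neg_one hu
  rwa [normSq_def', re_eq_zero_of_sq_eq_neg_one_s18 hu, sq, zero_mul, zero_add] at h

theorem re_coe_add_coe_mul (hu : u ^ 2 = -1) (a b : ℝ) : ((a : ℍ[ℝ]) + b * u).re = a := by
  simp [re_eq_zero_of_sq_eq_neg_one_s18 hu]

theorem normSq_coe_add_coe_mul (hu : u ^ 2 = -1) (a b : ℝ) :
    normSq ((a : ℍ[ℝ]) + (b : ℍ[ℝ]) * u) = a ^ 2 + b ^ 2 := by
  rw [normSq_def']
  simp [re_eq_zero_of_sq_eq_neg_one_s18 hu]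
  linear_combination b ^ 2 * imI_sq_add_imJ_sq_add_imK_sq_of_sq_eq_neg_one hu

theorem coe_mul_inv_mul_mul_coe_mul {r : ℝ} (hr : r ≠ 0) (a b c : ℍ[ℝ]) :
    ((r : ℍ[ℝ]) * a)⁻¹ * b * (r * c) = a⁻¹ * b * c := by
  rw [mul_inv_rev, ← coe_inv, mul_assoc _ (↑r⁻¹ : ℍ[ℝ]), coe_commutes, mul_assoc, mul_assoc,
    ← mul_assoc (↑r⁻¹ : ℍ[ℝ]), ← coe_mul, inv_mul_cancel₀ hr, coe_one, one_mul, mul_assoc]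

end Quaternion

attribute [local fun_prop] Quaternion.continuous_coe

noncomputable def quatCis (I : ℍ[ℝ]) (θ : ℝ) : ℍ[ℝ] := ↑(cos θ) + ↑(sin θ) * I

theorem coe_add_coe_mul_add_coe_mul_quatCis (x y ε θ : ℝ) (I : ℍ[ℝ]) :
    (x : ℍ[ℝ]) + y * I + ε * quatCis I θ = ↑(x + ε * cos θ) + ↑(y + ε * sin θ) * I := by
  simp only [quatCis, coe_add, coe_mul]
  noncomm_ring

/-- `q² - 2 Re(s) q + |s|²` at `q = x + y I_q`, `s = x + y I + ε e^{Iθ}`, divided by `ε`. -/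
noncomputable def circleDenom (y : ℝ) (Iq : ℍ[ℝ]) (ε θ : ℝ) : ℍ[ℝ] :=
  ↑(ε + 2 * y * sin θ) - ↑(2 * y * cos θ) * Iq

noncomputable def residueIntegrand (x y : ℝ) (I Iq : ℍ[ℝ]) (ε θ : ℝ) : ℍ[ℝ] :=
  -(circleDenom y Iq ε θ)⁻¹ * ((x + y * Iq) - star (x + y * I + ε * quatCis I θ)) * quatCis I θ

section

variable {x y : ℝ} {I Iq : ℍ[ℝ]}

theorem sq_sub_two_re_mul_add_norm_sq_eq_mul_circleDenom (hI : I ^ 2 = -1) (hIq : Iq ^ 2 = -1)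
    (ε θ : ℝ) :
    let q : ℍ[ℝ] := x + y * Iq
    let s : ℍ[ℝ] := x + y * I + ε * quatCis I θ
    q ^ 2 - 2 * ((s.re : ℝ) : ℍ[ℝ]) * q + ((‖s‖ ^ 2 : ℝ) : ℍ[ℝ]) = ε * circleDenom y Iq ε θ := by
  intro q s
  rw [sq ‖s‖, ← normSq_eq_norm_mul_self]
  simp only [s, coe_add_coe_mul_add_coe_mul_quatCis, re_coe_add_coe_mul hI,
    normSq_coe_add_coe_mul hI]
  ext <;> simp [q, circleDenom, sq, two_mul, re_eq_zero_of_sq_eq_neg_one_s18 hIq]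
  · linear_combination
      ε ^ 2 * sin_sq_add_cos_sq θ - y ^ 2 * imI_sq_add_imJ_sq_add_imK_sq_of_sq_eq_neg_one hIq
  all_goals ring

theorem circleDenom_ne_zero (hy : 0 < y) (hIq : Iq ^ 2 = -1) {ε : ℝ} (hε : |ε| < 2 * y)
    (θ : ℝ) : circleDenom y Iq ε θ ≠ 0 := by
  have hform : circleDenom y Iq ε θ = ↑(ε + 2 * y * sin θ) + ↑(-(2 * y * cos θ)) * Iq := by
    simp [circleDenom, sub_eq_add_neg]
  rw [← normSq_ne_zero, hform, normSq_coe_add_coe_mul hIq]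
  have hsin : -|ε| ≤ ε * sin θ :=
    calc -|ε| ≤ -(|ε| * |sin θ|) :=
          neg_le_neg (mul_le_of_le_one_right (abs_nonneg ε) (abs_sin_le_one θ))
      _ = -|ε * sin θ| := by rw [abs_mul]
      _ ≤ ε * sin θ := neg_abs_le _
  refine ne_of_gt ?_
  calc (0 : ℝ) < (2 * y - |ε|) ^ 2 := pow_pos (sub_pos.2 hε) 2
    _ = ε ^ 2 - 4 * y * |ε| + 4 * y ^ 2 := by rw [← sq_abs ε]; ring
    _ ≤ ε ^ 2 + 4 * y * (ε * sin θ) + 4 * y ^ 2 := by nlinarith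
    _ = (ε + 2 * y * sin θ) ^ 2 + (-(2 * y * cos θ)) ^ 2 := by
      linear_combination -4 * y ^ 2 * sin_sq_add_cos_sq θ

theorem continuous_circleDenom : Continuous (Function.uncurry (circleDenom y Iq)) := by
  unfold circleDenom
  fun_prop

theorem continuousOn_residueIntegrand (hy : 0 < y) (hIq : Iq ^ 2 = -1) :
    ContinuousOn (Function.uncurry (residueIntegrand x y I Iq))
      (Ioo (-(2 * y)) (2 * y) ×ˢ univ) := by
  have hinv : ContinuousOn (fun p : ℝ × ℝ => (circleDenom y Iq p.1 p.2)⁻¹)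
      (Ioo (-(2 * y)) (2 * y) ×ˢ univ) :=
    continuous_circleDenom.continuousOn.inv₀ fun p hp =>
      circleDenom_ne_zero hy hIq (abs_lt.2 hp.1) p.2
  unfold residueIntegrand quatCis
  exact (hinv.neg.mul (by fun_prop)).mul (by fun_prop)

theorem residueIntegrand_eq (hI : I ^ 2 = -1) (hIq : Iq ^ 2 = -1) {ε : ℝ} (hε : ε ≠ 0)
    (θ : ℝ) :
    let q : ℍ[ℝ] := x + y * Iq
    let s : ℍ[ℝ] := x + y * I + ε * quatCis I θ
    residueIntegrand x y I Iq ε θ =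
      -(q ^ 2 - 2 * ((s.re : ℝ) : ℍ[ℝ]) * q + ((‖s‖ ^ 2 : ℝ) : ℍ[ℝ]))⁻¹ * (q - star s) *
        (ε * quatCis I θ) := by
  intro q s
  rw [sq_sub_two_re_mul_add_norm_sq_eq_mul_circleDenom hI hIq, neg_mul, neg_mul,
    coe_mul_inv_mul_mul_coe_mul hε, residueIntegrand, neg_mul, neg_mul]

theorem residueIntegrand_zero (hy : 0 < y) (hI : I ^ 2 = -1) (hIq : Iq ^ 2 = -1) (θ : ℝ) :
    residueIntegrand x y I Iq 0 θ = (1 / 2 : ℝ) • (1 - Iq * I) := by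
  have hD : circleDenom y Iq 0 θ ≠ 0 :=
    circleDenom_ne_zero hy hIq (by rw [abs_zero]; positivity) θ
  have hmul : circleDenom y Iq 0 θ * ((1 / 2 : ℝ) • (1 - Iq * I)) =
      -((x + y * Iq - star (x + y * I + ((0 : ℝ) : ℍ[ℝ]) * quatCis I θ)) * quatCis I θ) := by
    have hIre := re_eq_zero_of_sq_eq_neg_one_s18 hI
    have hIim := imI_sq_add_imJ_sq_add_imK_sq_of_sq_eq_neg_one hI
    have hIqre := re_eq_zero_of_sq_eq_neg_one_s18 hIq
    have hIqim := imI_sq_add_imJ_sq_add_imK_sq_of_sq_eq_neg_one hIq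
    ext <;> simp [circleDenom, quatCis, two_mul, hIre, hIqre]
    · linear_combination -(y * sin θ) * hIim
    · linear_combination -(y * cos θ * I.imI) * hIqim
    · linear_combination -(y * cos θ * I.imJ) * hIqim
    · linear_combination -(y * cos θ * I.imK) * hIqim
  rw [residueIntegrand, neg_mul, neg_mul, mul_assoc, ← mul_neg, ← hmul,
    inv_mul_cancel_left₀ hD]

end

theorem stmt_18 (x y : ℝ) (hy : 0 < y) (I Iq : ℍ[ℝ])
    (hI : I ^ 2 = -1) (hIq : Iq ^ 2 = -1) (q : ℍ[ℝ])
    (hq : q = (x : ℍ[ℝ]) + (y : ℍ[ℝ]) * Iq) :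
    Filter.Tendsto
      (fun ε : ℝ =>
        (1 / (2 * π) : ℝ) •
          ∫ θ in (0 : ℝ)..(2 * π),
            (fun s : ℍ[ℝ] =>
                -(q ^ 2 - 2 * ((s.re : ℝ) : ℍ[ℝ]) * q + ((‖s‖ ^ 2 : ℝ) : ℍ[ℝ]))⁻¹ *
                  (q - star s))
              ((x : ℍ[ℝ]) + (y : ℍ[ℝ]) * I +
                (ε : ℍ[ℝ]) * ((Real.cos θ : ℍ[ℝ]) + (Real.sin θ : ℍ[ℝ]) * I)) *
            ((ε : ℍ[ℝ]) * ((Real.cos θ : ℍ[ℝ]) + (Real.sin θ : ℍ[ℝ]) * I)))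
      (nhdsWithin 0 (Set.Ioi 0))
      (nhds ((1 / 2 : ℝ) • (1 - Iq * I))) := by
  subst hq
  have h2y : (0 : ℝ) < 2 * y := by positivity
  have hcont : ContinuousAt
      (fun ε => (1 / (2 * π) : ℝ) • ∫ θ in (0 : ℝ)..(2 * π), residueIntegrand x y I Iq ε θ) 0 :=
    (continuousAt_intervalIntegral_of_continuousOn (Ioo_mem_nhds (neg_lt_zero.2 h2y) h2y)
      (continuousOn_residueIntegrand hy hIq) 0 (2 * π)).const_smul (1 / (2 * π) : ℝ)
  have hvalue : (1 / (2 * π) : ℝ) • ∫ θ in (0 : ℝ)..(2 * π), residueIntegrand x y I Iq 0 θ =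
      (1 / 2 : ℝ) • (1 - Iq * I) := by
    simp only [residueIntegrand_zero hy hI hIq, intervalIntegral.integral_const, sub_zero,
      smul_smul]
    congr 1
    field_simp
  rw [← hvalue]
  refine (hcont.tendsto.mono_left nhdsWithin_le_nhds).congr' ?_
  filter_upwards [self_mem_nhdsWithin] with ε (hε : 0 < ε)
  congr 1
  exact intervalIntegral.integral_congr fun θ _ => residueIntegrand_eq hI hIq hε.ne' θ
end
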